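/- arXiv:2311.12599 — 2 statements merged into one kernel-verified Lean document; each statement's English description precedes it below -/
import Mathlib

section
/- Let S be a poset with least element 0 carrying a weak contact relation δ_S, let Q be a poset with least element 0, and let κ : S → Q be an order-preserving map such that a = 0 if and only if κ(a) = 0, for every a ∈ S. Define δ_Q on Q by: b₁ δ_Q b₂ if and only if either (a) there is q ∈ Q with 0 < q, q ≤ b₁ and q ≤ b₂, or (b) there are a₁, a₂ ∈ S with a₁ δ_S a₂, κ(a₁) ≤ b₁ and κ(a₂) ≤ b₂. Then δ_Q is a weak contact relation on Q, κ is a contact homomorphism (a₁ δ_S a₂ implies κ(a₁) δ_Q κ(a₂)), and δ_Q is the smallest weak contact relation on Q making κ a contact homomorphism (i.e., any weak contact relation δ' on Q with a₁ δ_S a₂ implying κ(a₁) δ' κ(a₂) contains δ_Q). -/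
/-- A weak contact relation on a poset with least element `⊥`. -/
def IsWeakContact {S : Type*} [PartialOrder S] [OrderBot S] (δ : S → S → Prop) : Prop :=
  (∀ a b : S, δ a b → a ≠ ⊥ ∧ b ≠ ⊥) ∧
  (∀ a : S, a ≠ ⊥ → δ a a) ∧
  (∀ a b : S, δ a b → δ b a) ∧
  (∀ a b a₁ b₁ : S, δ a b → a ≤ a₁ → b ≤ b₁ → δ a₁ b₁)

/-!
Each clause of `δ_Q` is forced on any weak contact relation making `κ` a homomorphism: clause (a)
by reflexivity and (Ext) at a common nonzero lower bound, clause (b) by the homomorphism property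
and (Ext). Conversely, both clauses are upward closed and symmetric, and they only relate nonzero
elements because `κ` reflects `0`.
-/

section InducedContact

variable {S Q : Type*} [PartialOrder Q] [OrderBot Q]

def inducedContact (δS : S → S → Prop) (κ : S → Q) (b₁ b₂ : Q) : Prop :=
  (∃ q : Q, ⊥ < q ∧ q ≤ b₁ ∧ q ≤ b₂) ∨ ∃ a₁ a₂ : S, δS a₁ a₂ ∧ κ a₁ ≤ b₁ ∧ κ a₂ ≤ b₂

variable {δS : S → S → Prop} {κ : S → Q}

theorem inducedContact_map {a₁ a₂ : S} (h : δS a₁ a₂) : inducedContact δS κ (κ a₁) (κ a₂) :=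
  Or.inr ⟨a₁, a₂, h, le_rfl, le_rfl⟩

theorem inducedContact_refl {b : Q} (hb : b ≠ ⊥) : inducedContact δS κ b b :=
  Or.inl ⟨b, bot_lt_iff_ne_bot.mpr hb, le_rfl, le_rfl⟩

theorem inducedContact.mono {b₁ b₂ c₁ c₂ : Q} (h : inducedContact δS κ b₁ b₂)
    (h₁ : b₁ ≤ c₁) (h₂ : b₂ ≤ c₂) : inducedContact δS κ c₁ c₂ := by
  rcases h with ⟨q, hq, hq₁, hq₂⟩ | ⟨a₁, a₂, hδ, ha₁, ha₂⟩
  · exact Or.inl ⟨q, hq, hq₁.trans h₁, hq₂.trans h₂⟩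
  · exact Or.inr ⟨a₁, a₂, hδ, ha₁.trans h₁, ha₂.trans h₂⟩

theorem inducedContact.symm (hsymm : ∀ a₁ a₂, δS a₁ a₂ → δS a₂ a₁) {b₁ b₂ : Q}
    (h : inducedContact δS κ b₁ b₂) : inducedContact δS κ b₂ b₁ := by
  rcases h with ⟨q, hq, hq₁, hq₂⟩ | ⟨a₁, a₂, hδ, ha₁, ha₂⟩
  · exact Or.inl ⟨q, hq, hq₂, hq₁⟩
  · exact Or.inr ⟨a₂, a₁, hsymm a₁ a₂ hδ, ha₂, ha₁⟩

theorem inducedContact.ne_bot [PartialOrder S] [OrderBot S]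
    (hne : ∀ a₁ a₂, δS a₁ a₂ → a₁ ≠ ⊥ ∧ a₂ ≠ ⊥) (hκ : ∀ a, κ a = ⊥ → a = ⊥) {b₁ b₂ : Q}
    (h : inducedContact δS κ b₁ b₂) : b₁ ≠ ⊥ ∧ b₂ ≠ ⊥ := by
  rcases h with ⟨q, hq, hq₁, hq₂⟩ | ⟨a₁, a₂, hδ, ha₁, ha₂⟩
  · exact ⟨ne_bot_of_le_ne_bot hq.ne' hq₁, ne_bot_of_le_ne_bot hq.ne' hq₂⟩
  · obtain ⟨hne₁, hne₂⟩ := hne a₁ a₂ hδ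
    exact ⟨ne_bot_of_le_ne_bot (mt (hκ a₁) hne₁) ha₁, ne_bot_of_le_ne_bot (mt (hκ a₂) hne₂) ha₂⟩

theorem isWeakContact_inducedContact [PartialOrder S] [OrderBot S]
    (hne : ∀ a₁ a₂, δS a₁ a₂ → a₁ ≠ ⊥ ∧ a₂ ≠ ⊥) (hsymm : ∀ a₁ a₂, δS a₁ a₂ → δS a₂ a₁)
    (hκ : ∀ a, κ a = ⊥ → a = ⊥) : IsWeakContact (inducedContact δS κ) :=
  ⟨fun _ _ => inducedContact.ne_bot hne hκ, fun _ => inducedContact_refl,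
    fun _ _ => inducedContact.symm hsymm, fun _ _ _ _ => inducedContact.mono⟩

theorem inducedContact_le {δ' : Q → Q → Prop} (hδ' : IsWeakContact δ')
    (hmap : ∀ a₁ a₂, δS a₁ a₂ → δ' (κ a₁) (κ a₂)) {b₁ b₂ : Q}
    (h : inducedContact δS κ b₁ b₂) : δ' b₁ b₂ := by
  obtain ⟨-, hrefl, -, hext⟩ := hδ'
  rcases h with ⟨q, hq, hq₁, hq₂⟩ | ⟨a₁, a₂, hδ, ha₁, ha₂⟩
  · exact hext q q b₁ b₂ (hrefl q hq.ne') hq₁ hq₂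
  · exact hext _ _ b₁ b₂ (hmap a₁ a₂ hδ) ha₁ ha₂

end InducedContact

theorem stmt6_general {S Q : Type*} [PartialOrder S] [OrderBot S] [PartialOrder Q] [OrderBot Q]
    (δS : S → S → Prop) (hwc : IsWeakContact δS)
    (κ : S → Q) (hzero : ∀ a : S, a = ⊥ ↔ κ a = ⊥)
    (δQ : Q → Q → Prop)
    (hδQ : ∀ b₁ b₂ : Q, δQ b₁ b₂ ↔
      (∃ q : Q, ⊥ < q ∧ q ≤ b₁ ∧ q ≤ b₂) ∨
      (∃ a₁ a₂ : S, δS a₁ a₂ ∧ κ a₁ ≤ b₁ ∧ κ a₂ ≤ b₂)) :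
    IsWeakContact δQ ∧
    (∀ a₁ a₂ : S, δS a₁ a₂ → δQ (κ a₁) (κ a₂)) ∧
    (∀ δ' : Q → Q → Prop, IsWeakContact δ' →
      (∀ a₁ a₂ : S, δS a₁ a₂ → δ' (κ a₁) (κ a₂)) →
      ∀ b₁ b₂ : Q, δQ b₁ b₂ → δ' b₁ b₂) := by
  obtain rfl : δQ = inducedContact δS κ := funext₂ fun b₁ b₂ => propext (hδQ b₁ b₂)
  exact ⟨isWeakContact_inducedContact hwc.1 hwc.2.2.1 fun a => (hzero a).2,
    fun _ _ => inducedContact_map,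
    fun _ hδ' hmap _ _ => inducedContact_le hδ' hmap⟩

theorem stmt6 {S Q : Type*} [PartialOrder S] [OrderBot S] [PartialOrder Q] [OrderBot Q]
    (δS : S → S → Prop) (hwc : IsWeakContact δS)
    (κ : S → Q) (hmono : Monotone κ) (hzero : ∀ a : S, a = ⊥ ↔ κ a = ⊥)
    (δQ : Q → Q → Prop)
    (hδQ : ∀ b₁ b₂ : Q, δQ b₁ b₂ ↔
      (∃ q : Q, ⊥ < q ∧ q ≤ b₁ ∧ q ≤ b₂) ∨
      (∃ a₁ a₂ : S, δS a₁ a₂ ∧ κ a₁ ≤ b₁ ∧ κ a₂ ≤ b₂)) :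
    IsWeakContact δQ ∧
    (∀ a₁ a₂ : S, δS a₁ a₂ → δQ (κ a₁) (κ a₂)) ∧
    (∀ δ' : Q → Q → Prop, IsWeakContact δ' →
      (∀ a₁ a₂ : S, δS a₁ a₂ → δ' (κ a₁) (κ a₂)) →
      ∀ b₁ b₂ : Q, δQ b₁ b₂ → δ' b₁ b₂) :=
  stmt6_general δS hwc κ hzero δQ hδQ
end

section
/- Let S be a join-semilattice with least element 0 equipped with the overlap contact relation (a δ b if and only if there is p ∈ S with 0 < p, p ≤ a and p ≤ b). Then S satisfies (D1) if and only if S can be embedded into the powerset of some set X with the nonempty-intersection contact; that is, if and only if there exist a set X and an injective map h : S → 𝒫(X) with h(0) = ∅, h(a + b) = h(a) ∪ h(b) for all a, b ∈ S, and a δ b if and only if h(a) ∩ h(b) ≠ ∅, for all a, b ∈ S. -/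
/-!
The points of the representation are the prime clans: up-closed sets `F` of pairwise
`δ`-related elements such that `x ⊔ y ∈ F` forces `x ∈ F` or `y ∈ F`. Given `¬ a ≤ b`, Zorn's
lemma extends the principal ideal of `b` to an ideal `M` maximal among those avoiding `a`. Its
complement is up-closed and prime, and (D1) makes it a clan: for `x, y ∉ M` maximality yields
`m ∈ M` with `a ≤ m ⊔ x` and `a ≤ m ⊔ y`, so `¬ δ x y` would force `a ≤ m`. Hence sending `a` to
the set of prime clans containing it is an injective join-embedding, and for the overlap contact
a common part `p > ⊥` of `a` and `b` lies in some prime clan (take `b = ⊥` above).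

Conversely, (D1) holds for the overlap contact of a powerset, since
`(A ∪ C₀) ∩ (A ∪ C₁) = A` when `C₀ ∩ C₁ = ∅`.
-/

/-- Condition (D1). -/
def CondD1 {S : Type*} [SemilatticeSup S] [OrderBot S] (δ : S → S → Prop) : Prop :=
  ∀ a b c₀ c₁ : S, ¬ δ c₀ c₁ → b ≤ a ⊔ c₀ → b ≤ a ⊔ c₁ → b ≤ a

namespace Order.Ideal

theorem exists_le_maximal_notMem {P : Type*} [LE P] {I : Ideal P} {p : P} (hp : p ∉ I) :
    ∃ M, I ≤ M ∧ Maximal (fun J : Ideal P ↦ p ∉ J) M := by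
  refine zorn_le_nonempty₀ {J | p ∉ J} (fun c hcp hc J hJ ↦ ?_) I hp
  have hU : IsIdeal (⋃₀ (SetLike.coe '' c)) :=
    isIdeal_sUnion_of_isChain (by simp [Ideal.isIdeal])
      (hc.image_of_map_rel _ _ _ (by simp)) ⟨J, J, hJ, rfl⟩
  refine ⟨hU.toIdeal, ?_, fun K hK ↦ ?_⟩
  · simpa [mem_toIdeal] using fun K hK ↦ hcp hK
  · simpa [le_toIdeal] using Set.subset_biUnion_of_mem (u := SetLike.coe) hK

theorem exists_le_sup_of_maximal_notMem {P : Type*} [SemilatticeSup P] [IsCodirectedOrder P]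
    {M : Ideal P} {p z : P} (hM : Maximal (fun J : Ideal P ↦ p ∉ J) M) (hz : z ∉ M) :
    ∃ m ∈ M, p ≤ m ⊔ z := by
  by_contra! h
  have hp : p ∉ M ⊔ principal z := by
    rintro ⟨m, hm, w, hw, hpw⟩
    exact h m hm (hpw.trans (sup_le_sup_left hw m))
  exact (lt_sup_principal_of_notMem hz).not_ge (hM.2 hp le_sup_left)

end Order.Ideal

structure IsPrimeClan {S : Type*} [SemilatticeSup S] (δ : S → S → Prop) (F : Set S) : Prop where
  isUpperSet : IsUpperSet F
  mem_or_mem {x y : S} : x ⊔ y ∈ F → x ∈ F ∨ y ∈ F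
  contact {x y : S} : x ∈ F → y ∈ F → δ x y

section PrimeClan

open Order Ideal

variable {S : Type*} [SemilatticeSup S] {δ : S → S → Prop}

variable (δ) in
def clanRep (a : S) : Set {F : Set S // IsPrimeClan δ F} :=
  {F | a ∈ F.1}

theorem clanRep_sup (a b : S) : clanRep δ (a ⊔ b) = clanRep δ a ∪ clanRep δ b := by
  ext ⟨F, hF⟩
  exact ⟨hF.mem_or_mem, fun h ↦ h.elim (hF.isUpperSet le_sup_left) (hF.isUpperSet le_sup_right)⟩

theorem contact_of_clanRep_inter_nonempty {a b : S} (h : (clanRep δ a ∩ clanRep δ b).Nonempty) :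
    δ a b :=
  let ⟨F, ha, hb⟩ := h
  F.2.contact ha hb

variable [OrderBot S]

theorem clanRep_bot (hδ : ¬ δ ⊥ ⊥) : clanRep δ (⊥ : S) = ∅ :=
  Set.eq_empty_of_forall_notMem fun F hF ↦ hδ (F.2.contact hF hF)

theorem isPrimeClan_compl_of_maximal_notMem (hD1 : CondD1 δ) {M : Ideal S} {p : S}
    (hM : Maximal (fun J : Ideal S ↦ p ∉ J) M) : IsPrimeClan δ (M : Set S)ᶜ where
  isUpperSet := M.lower.compl
  mem_or_mem {x y} hxy := by
    by_contra! h
    simp only [Set.mem_compl_iff, not_not] at h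
    exact hxy (sup_mem h.1 h.2)
  contact {x y} hx hy := by
    by_contra hxy
    obtain ⟨m, hm, hpm⟩ := exists_le_sup_of_maximal_notMem hM hx
    obtain ⟨n, hn, hpn⟩ := exists_le_sup_of_maximal_notMem hM hy
    have hp : p ≤ m ⊔ n := hD1 (m ⊔ n) p x y hxy
      (hpm.trans (sup_le_sup_right le_sup_left x)) (hpn.trans (sup_le_sup_right le_sup_right y))
    exact hM.1 (M.lower hp (sup_mem hm hn))

theorem exists_isPrimeClan_mem_notMem (hD1 : CondD1 δ) {a b : S} (hab : ¬ a ≤ b) :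
    ∃ F, IsPrimeClan δ F ∧ a ∈ F ∧ b ∉ F := by
  obtain ⟨M, hbM, hM⟩ := exists_le_maximal_notMem (I := principal b) (p := a) hab
  exact ⟨_, isPrimeClan_compl_of_maximal_notMem hD1 hM, hM.1, fun h ↦ h (hbM mem_principal_self)⟩

theorem clanRep_subset_iff (hD1 : CondD1 δ) {a b : S} : clanRep δ a ⊆ clanRep δ b ↔ a ≤ b := by
  refine ⟨fun h ↦ ?_, fun hab F hF ↦ F.2.isUpperSet hab hF⟩
  by_contra hab
  obtain ⟨F, hF, haF, hbF⟩ := exists_isPrimeClan_mem_notMem hD1 hab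
  exact hbF (h (a := ⟨F, hF⟩) haF)

theorem clanRep_injective (hD1 : CondD1 δ) : Function.Injective (clanRep δ : S → _) :=
  fun _ _ h ↦ le_antisymm ((clanRep_subset_iff hD1).1 h.le) ((clanRep_subset_iff hD1).1 h.ge)

theorem clanRep_inter_nonempty_of_le (hD1 : CondD1 δ) {a b p : S} (hp : ⊥ < p) (hpa : p ≤ a)
    (hpb : p ≤ b) : (clanRep δ a ∩ clanRep δ b).Nonempty := by
  obtain ⟨F, hF, hpF, -⟩ := exists_isPrimeClan_mem_notMem (δ := δ) hD1 hp.not_ge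
  exact ⟨⟨F, hF⟩, hF.isUpperSet hpa hpF, hF.isUpperSet hpb hpF⟩

end PrimeClan

theorem condD1_of_injective_sup {S X : Type*} [SemilatticeSup S] [OrderBot S]
    {δ : S → S → Prop} {h : S → Set X} (hinj : Function.Injective h)
    (hsup : ∀ a b, h (a ⊔ b) = h a ∪ h b) (hδ : ∀ a b, (h a ∩ h b).Nonempty → δ a b) :
    CondD1 δ := by
  have subset_iff {a b : S} : h a ⊆ h b ↔ a ≤ b := by
    rw [← Set.union_eq_right, ← hsup, hinj.eq_iff, sup_eq_right]
  intro a b c₀ c₁ hc h₀ h₁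
  have hdisj : h c₀ ∩ h c₁ = ∅ := Set.not_nonempty_iff_eq_empty.1 (mt (hδ c₀ c₁) hc)
  rw [← subset_iff] at h₀ h₁ ⊢
  simpa [hsup, ← Set.union_inter_distrib_left, hdisj] using Set.subset_inter h₀ h₁

theorem stmt14 {S : Type} [SemilatticeSup S] [OrderBot S] (δ : S → S → Prop)
    (hov : ∀ a b : S, δ a b ↔ ∃ p : S, ⊥ < p ∧ p ≤ a ∧ p ≤ b) :
    CondD1 δ ↔
      ∃ (X : Type) (h : S → Set X),
        Function.Injective h ∧
        h ⊥ = ∅ ∧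
        (∀ a b : S, h (a ⊔ b) = h a ∪ h b) ∧
        (∀ a b : S, δ a b ↔ (h a ∩ h b).Nonempty) := by
  refine ⟨fun hD1 ↦ ?_, fun ⟨X, h, hinj, _, hsup, hδ⟩ ↦ condD1_of_injective_sup hinj hsup
    fun a b ↦ (hδ a b).2⟩
  have hbot : ¬ δ ⊥ ⊥ := fun h ↦
    let ⟨_, hp, hpb, _⟩ := (hov ⊥ ⊥).1 h
    hp.not_ge hpb
  refine ⟨_, clanRep δ, clanRep_injective hD1, clanRep_bot hbot, clanRep_sup, fun a b ↦
    ⟨fun hab ↦ ?_, contact_of_clanRep_inter_nonempty⟩⟩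
  obtain ⟨p, hp, hpa, hpb⟩ := (hov a b).1 hab
  exact clanRep_inter_nonempty_of_le hD1 hp hpa hpb
end
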